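/- Consider the one-sided master-item minimisation problem where the order sizes satisfy successive divisibility: w_{j+1} divides w_j for all j. Then the integer round-up property holds: the minimum integer number of master items equals ⌈z_LP⌉, where z_LP is the LP relaxation optimum. -/

import Mathlib

/-!
Pack greedily, largest size first. Because every larger size is a multiple of `w t`, after the
items of sizes `w 0, …, w (t-1)` are packed every bin load is a multiple of `w t`, so the items of
size `w t` fit as soon as the `w t`-units still free in the `N` bins suffice, which is the
condition `∑_{k ≤ t} q k * w k ≤ N * (w t * ⌊W / w t⌋)`. The same divisibility shows that each
pattern puts at most `w t * ⌊W / w t⌋` into sizes `≤ t`, so any fractional solution of value `z`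
satisfies this condition with `N = z`, hence with `N = ⌈z_LP⌉`.
-/

open Finset

theorem dvd_of_le_of_succ_dvd {α : Type*} [Monoid α] {m : ℕ} {w : Fin m → α}
    (hdiv : ∀ (j : ℕ) (h : j + 1 < m), w ⟨j + 1, h⟩ ∣ w ⟨j, Nat.lt_of_succ_lt h⟩)
    {j k : Fin m} (hjk : j ≤ k) : w k ∣ w j := by
  obtain ⟨j, hj⟩ := j
  obtain ⟨k, hk⟩ := k
  replace hjk : j ≤ k := hjk
  revert hk
  induction k, hjk using Nat.le_induction with
  | base => exact fun _ => dvd_rfl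
  | succ k _ ih => exact fun hk => (hdiv k hk).trans (ih (by omega))

theorem Nat.le_mul_div_of_dvd_of_le {d x W : ℕ} (hdx : d ∣ x) (hxW : x ≤ W) : x ≤ d * (W / d) := by
  obtain ⟨c, rfl⟩ := hdx
  rcases d.eq_zero_or_pos with rfl | hd
  · simp
  · exact Nat.mul_le_mul_left _ ((Nat.le_div_iff_mul_le hd).2 (by rwa [mul_comm]))

theorem Fin.exists_le_sum_eq_of_le_sum {N : ℕ} (f : Fin N → ℕ) {n : ℕ} (hn : n ≤ ∑ i, f i) :
    ∃ g ≤ f, ∑ i, g i = n := by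
  induction N generalizing n with
  | zero => exact ⟨0, fun i => i.elim0, by simp at hn; simp [hn]⟩
  | succ N ih =>
    rw [Fin.sum_univ_succ] at hn
    obtain ⟨g, hgf, hg⟩ := ih (fun i => f i.succ) (n := n - min n (f 0)) (by omega)
    refine ⟨Fin.cons (min n (f 0)) g, Fin.cases (by simp) (fun i => by simpa using hgf i), ?_⟩
    rw [Fin.sum_univ_succ]
    simp only [Fin.cons_zero, Fin.cons_succ, hg]
    omega

theorem Fin.exists_sum_eq_and_add_le {N K q : ℕ} {ℓ : Fin N → ℕ} (hℓ : ∀ i, ℓ i ≤ K)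
    (h : q + ∑ i, ℓ i ≤ N * K) : ∃ g : Fin N → ℕ, ∑ i, g i = q ∧ ∀ i, ℓ i + g i ≤ K := by
  have hfree : ∑ i, (K - ℓ i) + ∑ i, ℓ i = N * K := by
    simp [← sum_add_distrib, Nat.sub_add_cancel (hℓ _)]
  obtain ⟨g, hg, hgq⟩ := Fin.exists_le_sum_eq_of_le_sum (fun i => K - ℓ i) (n := q) (by omega)
  exact ⟨g, hgq, fun i => by have : g i ≤ K - ℓ i := hg i; have := hℓ i; omega⟩

theorem Fin.exists_sum_eq_and_add_mul_le {N W d q : ℕ} {L : Fin N → ℕ} (hd : 0 < d)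
    (hdvd : ∀ i, d ∣ L i) (hLW : ∀ i, L i ≤ W) (h : q * d + ∑ i, L i ≤ N * (d * (W / d))) :
    ∃ g : Fin N → ℕ, ∑ i, g i = q ∧ ∀ i, L i + g i * d ≤ W := by
  obtain ⟨g, hgq, hgW⟩ := Fin.exists_sum_eq_and_add_le (q := q) (K := W / d) (ℓ := fun i => L i / d)
    (fun i => Nat.div_le_div_right (hLW i)) <| by
      refine Nat.le_of_mul_le_mul_right ?_ hd
      rw [add_mul, sum_mul, sum_congr rfl fun i _ => Nat.div_mul_cancel (hdvd i)]
      linarith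
  refine ⟨g, hgq, fun i => ?_⟩
  calc L i + g i * d = (L i / d + g i) * d := by rw [add_mul, Nat.div_mul_cancel (hdvd i)]
    _ ≤ W / d * d := Nat.mul_le_mul_right _ (hgW i)
    _ ≤ W := Nat.div_mul_le_self W d

theorem exists_packing_of_sum_Iic_le {m W N : ℕ} {w q : Fin m → ℕ} (hpos : ∀ j, 0 < w j)
    (hchain : ∀ j k : Fin m, j ≤ k → w k ∣ w j)
    (hcap : ∀ t, ∑ k ∈ Iic t, q k * w k ≤ N * (w t * (W / w t))) :
    ∃ A : Fin N → Fin m → ℕ, (∀ i, ∑ k, A i k * w k ≤ W) ∧ ∀ k, ∑ i, A i k = q k := by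
  induction m with
  | zero => exact ⟨fun _ => Fin.elim0, by simp, fun k => k.elim0⟩
  | succ m ih =>
    obtain ⟨A, hAW, hAq⟩ := ih (w := fun k => w k.castSucc) (q := fun k => q k.castSucc)
      (fun j => hpos _) (fun j k h => hchain _ _ (Fin.castSucc_le_castSucc_iff.2 h))
      (fun t => by simpa [Fin.sum_Iic_castSucc] using hcap t.castSucc)
    have htotal : ∑ i, ∑ k, A i k * w k.castSucc = ∑ k : Fin m, q k.castSucc * w k.castSucc := by
      rw [sum_comm]
      simp only [← sum_mul, hAq]
    obtain ⟨g, hgq, hgW⟩ := Fin.exists_sum_eq_and_add_mul_le (hpos (Fin.last m))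
      (fun i => dvd_sum fun k _ => (hchain _ _ (Fin.le_last _)).mul_left _) hAW <| by
        have := hcap (Fin.last m)
        rw [← Fin.top_eq_last, Iic_top, Fin.sum_univ_castSucc, ← htotal] at this
        simpa [add_comm, Fin.top_eq_last] using this
    refine ⟨fun i => Fin.snoc (α := fun _ => ℕ) (A i) (g i), fun i => ?_,
      Fin.lastCases ?_ fun k => ?_⟩
    · simpa [Fin.sum_univ_castSucc] using hgW i
    · simpa using hgq
    · simpa using hAq k

section Patterns

variable {ι : Type*} [Fintype ι]

def lpValues (W : ℕ) (w q : ι → ℕ) : Set ℝ :=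
  {z | ∃ x : (ι → ℕ) →₀ ℝ, (∀ a ∈ x.support, ∑ j, a j * w j ≤ W) ∧ (∀ a, 0 ≤ x a) ∧
    (∀ j, (q j : ℝ) ≤ x.sum fun a c => c * (a j : ℝ)) ∧ x.sum (fun _ c => c) = z}

def intValues (W : ℕ) (w q : ι → ℕ) : Set ℕ :=
  {n | ∃ x : (ι → ℕ) →₀ ℕ, (∀ a ∈ x.support, ∑ j, a j * w j ≤ W) ∧
    (∀ j, q j ≤ x.sum fun a c => c * a j) ∧ x.sum (fun _ c => c) = n}

variable {W : ℕ} {w q : ι → ℕ}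

theorem nonneg_of_mem_lpValues {z : ℝ} (hz : z ∈ lpValues W w q) : 0 ≤ z := by
  obtain ⟨x, -, hx0, -, rfl⟩ := hz
  exact sum_nonneg fun a _ => hx0 a

theorem natCast_mem_lpValues {n : ℕ} (hn : n ∈ intValues W w q) : (n : ℝ) ∈ lpValues W w q := by
  obtain ⟨y, hyW, hyq, rfl⟩ := hn
  refine ⟨y.mapRange (↑) Nat.cast_zero, fun a ha => hyW a (Finsupp.support_mapRange ha),
    fun a => by simp, fun j => ?_, ?_⟩
  · rw [Finsupp.sum_mapRange_index (by simp)]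
    exact_mod_cast hyq j
  · rw [Finsupp.sum_mapRange_index (by simp)]
    push_cast [Finsupp.sum]
    rfl

theorem mem_intValues_of_packing {N : ℕ} (A : Fin N → ι → ℕ) (hAW : ∀ i, ∑ k, A i k * w k ≤ W)
    (hAq : ∀ k, ∑ i, A i k = q k) : N ∈ intValues W w q := by
  refine ⟨∑ i, Finsupp.single (A i) 1, fun a ha => ?_, fun j => ?_, ?_⟩
  · obtain ⟨i, -, hi⟩ := mem_biUnion.mp (Finsupp.support_finsetSum ha)
    rw [mem_singleton.mp (Finsupp.support_single_subset hi)]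
    exact hAW i
  · rw [← Finsupp.sum_finsetSum_index (by simp) (fun _ _ _ => add_mul _ _ _)]
    simp [hAq]
  · rw [← Finsupp.sum_finsetSum_index (by simp) (fun _ _ _ => rfl)]
    simp

theorem sum_mul_le_of_mem_lpValues (s : Finset ι) {C : ℕ}
    (hC : ∀ a : ι → ℕ, ∑ k, a k * w k ≤ W → ∑ k ∈ s, a k * w k ≤ C) {z : ℝ}
    (hz : z ∈ lpValues W w q) : ((∑ k ∈ s, q k * w k : ℕ) : ℝ) ≤ z * C := by
  obtain ⟨x, hxW, hx0, hxq, rfl⟩ := hz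
  calc ((∑ k ∈ s, q k * w k : ℕ) : ℝ)
      ≤ ∑ k ∈ s, (x.sum fun a c => c * (a k : ℝ)) * w k := by
        push_cast
        exact sum_le_sum fun k _ => mul_le_mul_of_nonneg_right (hxq k) (by positivity)
    _ = ∑ a ∈ x.support, x a * ((∑ k ∈ s, a k * w k : ℕ) : ℝ) := by
        simp only [Finsupp.sum, sum_mul]
        push_cast
        rw [sum_comm]
        exact sum_congr rfl fun _ _ => by rw [mul_sum]; exact sum_congr rfl fun _ _ => by ring
    _ ≤ ∑ a ∈ x.support, x a * C := sum_le_sum fun a ha =>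
        mul_le_mul_of_nonneg_left (by exact_mod_cast hC a (hxW a ha)) (hx0 a)
    _ = (x.sum fun _ c => c) * C := by rw [← sum_mul]; rfl

end Patterns

theorem sum_Iic_mul_le_of_mem_lpValues {m W : ℕ} {w q : Fin m → ℕ}
    (hchain : ∀ j k : Fin m, j ≤ k → w k ∣ w j) {z : ℝ} (hz : z ∈ lpValues W w q) (t : Fin m) :
    ((∑ k ∈ Iic t, q k * w k : ℕ) : ℝ) ≤ z * (w t * (W / w t) : ℕ) :=
  sum_mul_le_of_mem_lpValues _ (fun _ ha => Nat.le_mul_div_of_dvd_of_le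
    (dvd_sum fun k hk => (hchain k t (mem_Iic.mp hk)).mul_left _)
    ((sum_le_sum_of_subset (subset_univ _)).trans ha)) hz

theorem stmt16_general (m W : ℕ) (w q : Fin m → ℕ)
    (hpos : ∀ j, 0 < w j)
    (hdiv : ∀ (j : ℕ) (h : j + 1 < m), w ⟨j + 1, h⟩ ∣ w ⟨j, Nat.lt_of_succ_lt h⟩)
    (zLP : ℝ) (zstar : ℕ)
    (hLP : IsLeast {z : ℝ | ∃ x : (Fin m → ℕ) →₀ ℝ,
      (∀ a ∈ x.support, ∑ j, a j * w j ≤ W) ∧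
      (∀ a, 0 ≤ x a) ∧
      (∀ j, (q j : ℝ) ≤ x.sum (fun a c => c * (a j : ℝ))) ∧
      x.sum (fun _ c => c) = z} zLP)
    (hInt : IsLeast {n : ℕ | ∃ x : (Fin m → ℕ) →₀ ℕ,
      (∀ a ∈ x.support, ∑ j, a j * w j ≤ W) ∧
      (∀ j, q j ≤ x.sum (fun a c => c * a j)) ∧
      x.sum (fun _ c => c) = n} zstar) :
    (zstar : ℤ) = ⌈zLP⌉ := by
  have hchain : ∀ j k : Fin m, j ≤ k → w k ∣ w j := fun _ _ => dvd_of_le_of_succ_dvd hdiv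
  obtain ⟨A, hAW, hAq⟩ := exists_packing_of_sum_Iic_le (N := ⌈zLP⌉₊) hpos hchain fun t => by
    exact_mod_cast (sum_Iic_mul_le_of_mem_lpValues hchain hLP.1 t).trans
      (mul_le_mul_of_nonneg_right (Nat.le_ceil zLP) (Nat.cast_nonneg _))
  have hle : zstar ≤ ⌈zLP⌉₊ := hInt.2 (mem_intValues_of_packing A hAW hAq)
  have hge : ⌈zLP⌉₊ ≤ zstar := Nat.ceil_le.2 (hLP.2 (natCast_mem_lpValues hInt.1))
  rw [← Int.natCast_ceil_eq_ceil (nonneg_of_mem_lpValues hLP.1), le_antisymm hle hge]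

/-- Marcotte's divisibility theorem: for a one-sided instance whose
sizes are decreasing, positive, fit in the master, and satisfy successive
divisibility (w_{j+1} ∣ w_j), the integer round-up property holds: the integer
optimum of the master-item minimisation problem equals ⌈z_LP⌉. -/
theorem stmt16 (m W : ℕ) (w q : Fin m → ℕ)
    (hpos : ∀ j, 0 < w j) (hle : ∀ j, w j ≤ W)
    (hdec : ∀ j k : Fin m, j < k → w k < w j)
    (hdiv : ∀ (j : ℕ) (h : j + 1 < m), w ⟨j + 1, h⟩ ∣ w ⟨j, Nat.lt_of_succ_lt h⟩)
    (hq : ∀ j, 0 < q j)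
    (zLP : ℝ) (zstar : ℕ)
    (hLP : IsLeast {z : ℝ | ∃ x : (Fin m → ℕ) →₀ ℝ,
      (∀ a ∈ x.support, ∑ j, a j * w j ≤ W) ∧
      (∀ a, 0 ≤ x a) ∧
      (∀ j, (q j : ℝ) ≤ x.sum (fun a c => c * (a j : ℝ))) ∧
      x.sum (fun _ c => c) = z} zLP)
    (hInt : IsLeast {n : ℕ | ∃ x : (Fin m → ℕ) →₀ ℕ,
      (∀ a ∈ x.support, ∑ j, a j * w j ≤ W) ∧
      (∀ j, q j ≤ x.sum (fun a c => c * a j)) ∧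
      x.sum (fun _ c => c) = n} zstar) :
    (zstar : ℤ) = ⌈zLP⌉ :=
  stmt16_general m W w q hpos hdiv zLP zstar hLP hInt
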